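/- Fix a bijective enumeration (q_i)_{i≥1} of the rational numbers in (0,1), let f(x) = Σ_{i : q_i < x} 2^{−i} for x ∈ [0,1], and for v ∈ (0,1) define f_v : [0,1] → ℝ by f_v(x) = f(x − v) if x ≥ v and f_v(x) = f(x − v + 1) if x < v. Let v₁,…,v_m ∈ (0,1) be such that v_i − v_j is irrational whenever i ≠ j, and let β₁,…,β_m ∈ ℝ. Then the total variation of h = β₁ f_{v₁} + ⋯ + β_m f_{v_m} on [0,1] satisfies Σ_{i=1}^m |β_i| ≤ V(h) ≤ 3 Σ_{i=1}^m |β_i|. -/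

import Mathlib

open Set Filter Topology

/-- `jumpF q x = Σ_{i : q i < x} 2^{-i}`, where `(q_i)_{i ≥ 1}` is an enumeration of the
rationals of `(0,1)`. -/
noncomputable def jumpF (q : ℕ+ → ℝ) (x : ℝ) : ℝ :=
  ∑' i : ℕ+, if q i < x then (1 / 2 : ℝ) ^ (i : ℕ) else 0

/-- The translate `f_v` of `f = jumpF q`: `f_v(x) = f(x - v)` if `x ≥ v`,
and `f_v(x) = f(x - v + 1)` if `x < v`. -/
noncomputable def jumpFv (q : ℕ+ → ℝ) (v x : ℝ) : ℝ :=
  if v ≤ x then jumpF q (x - v) else jumpF q (x - v + 1)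

lemma summable_half : Summable (fun i : ℕ+ => (1 / 2 : ℝ) ^ (i : ℕ)) :=
  summable_geometric_two.comp_injective (fun a b h => PNat.coe_injective h)

lemma tsum_half : ∑' i : ℕ+, (1 / 2 : ℝ) ^ (i : ℕ) = 1 := by
  rw [← Equiv.pnatEquivNat.symm.tsum_eq (fun i : ℕ+ => (1 / 2 : ℝ) ^ (i : ℕ))]
  have key : ∀ n : ℕ, (1 / 2 : ℝ) ^ ((Equiv.pnatEquivNat.symm n : ℕ+) : ℕ)
      = (1 / 2 : ℝ) * (1 / 2 : ℝ) ^ n := by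
    intro n
    have : ((Equiv.pnatEquivNat.symm n : ℕ+) : ℕ) = n + 1 := rfl
    rw [this, pow_succ]; ring
  rw [tsum_congr key, tsum_mul_left, tsum_geometric_of_lt_one (by norm_num) (by norm_num)]
  norm_num

lemma summable_term (q : ℕ+ → ℝ) (x : ℝ) :
    Summable (fun i : ℕ+ => if q i < x then (1 / 2 : ℝ) ^ (i : ℕ) else 0) := by
  apply Summable.of_nonneg_of_le (fun i => ?_) (fun i => ?_) summable_half
  · split <;> positivity
  · split
    · exact le_rfl
    · positivity

lemma jumpF_nonneg (q : ℕ+ → ℝ) (x : ℝ) : 0 ≤ jumpF q x :=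
  tsum_nonneg (fun i => by split <;> positivity)

lemma jumpF_le_one (q : ℕ+ → ℝ) (x : ℝ) : jumpF q x ≤ 1 := by
  rw [← tsum_half]
  refine (summable_term q x).tsum_le_tsum (fun i => ?_) summable_half
  split
  · exact le_rfl
  · positivity

lemma jumpF_mono (q : ℕ+ → ℝ) : Monotone (jumpF q) := by
  intro x y hxy
  refine (summable_term q x).tsum_le_tsum (fun i => ?_) (summable_term q y)
  split_ifs with h1 h2 h2
  · exact le_rfl
  · exact absurd (h1.trans_le hxy) h2
  · positivity
  · exact le_rfl

lemma jumpF_of_nonpos {q : ℕ+ → ℝ} (hq0 : ∀ i, 0 < q i) {x : ℝ} (hx : x ≤ 0) :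
    jumpF q x = 0 := by
  have key : ∀ i : ℕ+, (if q i < x then (1 / 2 : ℝ) ^ (i : ℕ) else 0) = 0 := fun i =>
    if_neg (not_lt.2 (hx.trans (hq0 i).le))
  rw [jumpF, tsum_congr key, tsum_zero]

lemma jumpF_of_one_le {q : ℕ+ → ℝ} (hq1 : ∀ i, q i < 1) {x : ℝ} (hx : 1 ≤ x) :
    jumpF q x = 1 := by
  have key : ∀ i : ℕ+, (if q i < x then (1 / 2 : ℝ) ^ (i : ℕ) else 0)
      = (1 / 2 : ℝ) ^ (i : ℕ) := fun i => if_pos ((hq1 i).trans_le hx)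
  rw [jumpF, tsum_congr key, tsum_half]

lemma jumpF_leftCont (q : ℕ+ → ℝ) (x : ℝ) :
    Tendsto (jumpF q) (𝓝[<] x) (𝓝 (jumpF q x)) := by
  refine tendsto_tsum_of_dominated_convergence (𝓕 := 𝓝[<] x)
    (f := fun y (i : ℕ+) => if q i < y then (1 / 2 : ℝ) ^ (i : ℕ) else 0)
    (g := fun i : ℕ+ => if q i < x then (1 / 2 : ℝ) ^ (i : ℕ) else 0)
    (bound := fun i : ℕ+ => (1 / 2 : ℝ) ^ (i : ℕ)) summable_half (fun k => ?_) ?_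
  · show Tendsto (fun y => if q k < y then (1 / 2 : ℝ) ^ (k : ℕ) else 0) (𝓝[<] x)
      (𝓝 (if q k < x then (1 / 2 : ℝ) ^ (k : ℕ) else 0))
    by_cases h : q k < x
    · rw [if_pos h]
      refine Tendsto.congr' ?_ (tendsto_const_nhds (x := (1 / 2 : ℝ) ^ (k : ℕ)))
      filter_upwards [Ioo_mem_nhdsLT_of_mem (Set.mem_Ioc.2 ⟨h, le_refl x⟩)] with y hy
      rw [if_pos hy.1]
    · rw [if_neg h]
      refine Tendsto.congr' ?_ (tendsto_const_nhds (x := (0 : ℝ)))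
      filter_upwards [self_mem_nhdsWithin] with y hy
      rw [if_neg (fun hk => h (hk.trans hy))]
  · filter_upwards with y k
    split
    · rw [Real.norm_eq_abs, abs_of_nonneg (by positivity)]
    · rw [norm_zero]; positivity

lemma tendsto_sub_nhdsLT (c x : ℝ) :
    Tendsto (fun y : ℝ => y - c) (𝓝[<] x) (𝓝[<] (x - c)) := by
  rw [tendsto_nhdsWithin_iff]
  constructor
  · exact ((continuous_sub_right c).tendsto x).mono_left nhdsWithin_le_nhds
  · filter_upwards [self_mem_nhdsWithin] with y hy
    exact sub_lt_sub_right hy c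

lemma jumpFv_leftTendsto_of_lt (q : ℕ+ → ℝ) {v x : ℝ} (hvx : v < x) :
    Tendsto (jumpFv q v) (𝓝[<] x) (𝓝 (jumpFv q v x)) := by
  have h1 : Tendsto (fun y => jumpF q (y - v)) (𝓝[<] x) (𝓝 (jumpF q (x - v))) :=
    (jumpF_leftCont q (x - v)).comp (tendsto_sub_nhdsLT v x)
  rw [jumpFv, if_pos hvx.le]
  refine h1.congr' ?_
  filter_upwards [Ioo_mem_nhdsLT_of_mem (Set.mem_Ioc.2 ⟨hvx, le_refl x⟩)] with y hy
  rw [jumpFv, if_pos hy.1.le]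

lemma jumpFv_leftTendsto_of_gt (q : ℕ+ → ℝ) {v x : ℝ} (hxv : x < v) :
    Tendsto (jumpFv q v) (𝓝[<] x) (𝓝 (jumpFv q v x)) := by
  have h1 : Tendsto (fun y => jumpF q (y - (v - 1))) (𝓝[<] x) (𝓝 (jumpF q (x - (v - 1)))) :=
    (jumpF_leftCont q _).comp (tendsto_sub_nhdsLT (v - 1) x)
  rw [jumpFv, if_neg (not_le.2 hxv)]
  have hx' : x - v + 1 = x - (v - 1) := by ring
  rw [hx']
  refine h1.congr' ?_
  filter_upwards [self_mem_nhdsWithin] with y hy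
  have hy' : y < x := hy
  rw [jumpFv, if_neg (not_le.2 (hy'.trans hxv))]
  congr 1; ring

lemma jumpFv_leftTendsto_self (q : ℕ+ → ℝ) (hq1 : ∀ i, q i < 1) (v : ℝ) :
    Tendsto (jumpFv q v) (𝓝[<] v) (𝓝 1) := by
  have h1 : Tendsto (fun y => jumpF q (y - (v - 1))) (𝓝[<] v) (𝓝 (jumpF q (v - (v - 1)))) :=
    (jumpF_leftCont q _).comp (tendsto_sub_nhdsLT (v - 1) v)
  have h2 : jumpF q (v - (v - 1)) = 1 := jumpF_of_one_le hq1 (by linarith)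
  rw [h2] at h1
  refine h1.congr' ?_
  filter_upwards [self_mem_nhdsWithin] with y hy
  have hy' : y < v := hy
  rw [jumpFv, if_neg (not_le.2 hy')]
  congr 1; ring

noncomputable def gAux (q : ℕ+ → ℝ) (v x : ℝ) : ℝ :=
  if v ≤ x then jumpF q (x - v) + 1 else jumpF q (x - v + 1)

noncomputable def indAux (v x : ℝ) : ℝ := if v ≤ x then 1 else 0

lemma jumpFv_eq_sub (q : ℕ+ → ℝ) (v x : ℝ) :
    jumpFv q v x = gAux q v x - indAux v x := by
  unfold jumpFv gAux indAux; split_ifs <;> ring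

lemma gAux_mono {q : ℕ+ → ℝ} (v : ℝ) : Monotone (gAux q v) := by
  intro x y hxy
  unfold gAux
  split_ifs with h1 h2 h2
  · exact add_le_add_left (jumpF_mono q (by linarith)) 1
  · exact absurd (h1.trans hxy) h2
  · calc jumpF q (x - v + 1) ≤ 1 := jumpF_le_one q _
      _ ≤ jumpF q (y - v) + 1 := by linarith [jumpF_nonneg q (y - v)]
  · exact jumpF_mono q (by linarith)

lemma indAux_mono (v : ℝ) : Monotone (indAux v) := by
  intro x y hxy
  unfold indAux
  split_ifs with h1 h2 h2
  · exact le_rfl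
  · exact absurd (h1.trans hxy) h2
  · norm_num
  · exact le_rfl

lemma upper_bound (q : ℕ+ → ℝ) (hq0 : ∀ i, 0 < q i)
    (m : ℕ) (v β : Fin (m + 1) → ℝ) (hv : ∀ i, v i ∈ Set.Ioo (0 : ℝ) 1) :
    eVariationOn (fun x => ∑ i, β i * jumpFv q (v i) x) (Set.Icc 0 1) ≤
      ENNReal.ofReal (2 * ∑ i, |β i|) := by
  apply iSup_le
  rintro ⟨n, u, hu, us⟩
  have key : ∀ i : Fin (m + 1),
      ∑ j ∈ Finset.range n, |jumpFv q (v i) (u (j + 1)) - jumpFv q (v i) (u j)| ≤ 2 := by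
    intro i
    have hb : ∀ j ∈ Finset.range n, |jumpFv q (v i) (u (j + 1)) - jumpFv q (v i) (u j)|
        ≤ (gAux q (v i) (u (j + 1)) - gAux q (v i) (u j))
          + (indAux (v i) (u (j + 1)) - indAux (v i) (u j)) := by
      intro j _
      have h1 : gAux q (v i) (u j) ≤ gAux q (v i) (u (j + 1)) :=
        gAux_mono _ (hu (Nat.le_succ j))
      have h2 : indAux (v i) (u j) ≤ indAux (v i) (u (j + 1)) :=
        indAux_mono _ (hu (Nat.le_succ j))
      have he : jumpFv q (v i) (u (j + 1)) - jumpFv q (v i) (u j)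
          = (gAux q (v i) (u (j + 1)) - gAux q (v i) (u j))
            - (indAux (v i) (u (j + 1)) - indAux (v i) (u j)) := by
        rw [jumpFv_eq_sub, jumpFv_eq_sub]; ring
      rw [he]
      refine (abs_sub _ _).trans ?_
      rw [abs_of_nonneg (sub_nonneg.2 h1), abs_of_nonneg (sub_nonneg.2 h2)]
    refine (Finset.sum_le_sum hb).trans ?_
    rw [Finset.sum_add_distrib, Finset.sum_range_sub (fun j => gAux q (v i) (u j)),
      Finset.sum_range_sub (fun j => indAux (v i) (u j))]
    have e1 : gAux q (v i) 1 = jumpF q (1 - v i) + 1 := by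
      unfold gAux; rw [if_pos (hv i).2.le]
    have e0 : gAux q (v i) 0 = jumpF q (1 - v i) := by
      unfold gAux; rw [if_neg (not_le.2 (hv i).1)]; congr 1; ring
    have hg1 : gAux q (v i) (u n) ≤ gAux q (v i) 1 := gAux_mono _ (us n).2
    have hg0 : gAux q (v i) 0 ≤ gAux q (v i) (u 0) := gAux_mono _ (us 0).1
    have hi1 : indAux (v i) (u n) ≤ 1 := by unfold indAux; split_ifs <;> norm_num
    have hi0 : 0 ≤ indAux (v i) (u 0) := by unfold indAux; split_ifs <;> norm_num
    rw [e1, e0] at *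
    linarith
  have main : ∑ j ∈ Finset.range n,
      |(∑ i, β i * jumpFv q (v i) (u (j + 1))) - ∑ i, β i * jumpFv q (v i) (u j)|
      ≤ 2 * ∑ i, |β i| := by
    calc ∑ j ∈ Finset.range n,
        |(∑ i, β i * jumpFv q (v i) (u (j + 1))) - ∑ i, β i * jumpFv q (v i) (u j)|
        ≤ ∑ j ∈ Finset.range n, ∑ i,
            |β i| * |jumpFv q (v i) (u (j + 1)) - jumpFv q (v i) (u j)| := by
          refine Finset.sum_le_sum fun j _ => ?_
          rw [← Finset.sum_sub_distrib]
          refine (Finset.abs_sum_le_sum_abs _ _).trans ?_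
          refine Finset.sum_le_sum fun i _ => ?_
          rw [← mul_sub, abs_mul]
      _ = ∑ i, |β i| * ∑ j ∈ Finset.range n,
            |jumpFv q (v i) (u (j + 1)) - jumpFv q (v i) (u j)| := by
          rw [Finset.sum_comm]
          simp [Finset.mul_sum]
      _ ≤ ∑ i : Fin (m + 1), |β i| * 2 :=
          Finset.sum_le_sum fun i _ => mul_le_mul_of_nonneg_left (key i) (abs_nonneg _)
      _ = 2 * ∑ i, |β i| := by rw [← Finset.sum_mul]; ring
  calc ∑ j ∈ Finset.range n,
      edist ((fun x => ∑ i, β i * jumpFv q (v i) x) (u (j + 1)))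
        ((fun x => ∑ i, β i * jumpFv q (v i) x) (u j))
      = ∑ j ∈ Finset.range n, ENNReal.ofReal
          |(∑ i, β i * jumpFv q (v i) (u (j + 1))) - ∑ i, β i * jumpFv q (v i) (u j)| := by
        refine Finset.sum_congr rfl fun j _ => ?_
        rw [edist_dist, Real.dist_eq]
    _ = ENNReal.ofReal (∑ j ∈ Finset.range n,
          |(∑ i, β i * jumpFv q (v i) (u (j + 1))) - ∑ i, β i * jumpFv q (v i) (u j)|) :=
        (ENNReal.ofReal_sum_of_nonneg fun j _ => abs_nonneg _).symm
    _ ≤ ENNReal.ofReal (2 * ∑ i, |β i|) := ENNReal.ofReal_le_ofReal main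

lemma lower_aux (h : ℝ → ℝ) (n : ℕ) :
    ∀ (b : ℝ) (w δ : Fin n → ℝ), StrictMono w → b ≤ 1 →
    (∀ j, w j ∈ Set.Ioc (0 : ℝ) b) →
    (∀ j (η : ℝ), 0 < η → ∀ a', 0 ≤ a' → a' < w j →
        ∃ t, a' < t ∧ t < w j ∧ δ j - η ≤ |h (w j) - h t|) →
    ∀ η : ℝ, 0 < η →
    (∑ j, ENNReal.ofReal (δ j - η)) ≤ eVariationOn h (Set.Icc 0 1 ∩ Set.Icc 0 b) := by
  induction n with
  | zero => intro b w δ _ _ _ _ η _; simp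
  | succ n ih =>
    intro b w δ hw hb1 hmem hjump η hη
    set a'' : ℝ := if hn : n = 0 then 0 else w ⟨n - 1, by omega⟩ with ha''
    have ha0 : 0 ≤ a'' := by
      rw [ha'']; split
      · exact le_rfl
      · exact (hmem _).1.le
    have halt : a'' < w (Fin.last n) := by
      rw [ha'']; split
      · exact (hmem _).1
      · refine hw ?_
        rw [Fin.lt_def]
        simp only [Fin.last]
        omega
    have hub : ∀ j : Fin n, w (Fin.castSucc j) ≤ a'' := by
      intro j
      rw [ha'']; split
      · exact absurd j.isLt (by omega)
      · refine hw.monotone ?_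
        rw [Fin.le_def]
        simp only [Fin.coe_castSucc]
        omega
    obtain ⟨t, hat, htw, hjt⟩ := hjump (Fin.last n) η hη a'' ha0 halt
    have ht0 : 0 ≤ t := ha0.trans hat.le
    have htb : t ≤ b := (htw.trans_le (hmem _).2).le
    have ht1 : t ∈ Set.Icc (0 : ℝ) 1 := ⟨ht0, htb.trans hb1⟩
    rw [← eVariationOn.Icc_add_Icc h ht0 htb ht1, Fin.sum_univ_castSucc]
    refine add_le_add ?_ ?_
    · refine ih t (fun j => w (Fin.castSucc j)) (fun j => δ (Fin.castSucc j))
        (hw.comp Fin.strictMono_castSucc) (htb.trans hb1)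
        (fun j => ⟨(hmem _).1, (hub j).trans hat.le⟩)
        (fun j η' hη' a' h0 hlt => hjump (Fin.castSucc j) η' hη' a' h0 hlt) η hη
    · calc ENNReal.ofReal (δ (Fin.last n) - η)
          ≤ ENNReal.ofReal |h (w (Fin.last n)) - h t| := ENNReal.ofReal_le_ofReal hjt
        _ = edist (h (w (Fin.last n))) (h t) := by rw [edist_dist, Real.dist_eq]
        _ ≤ eVariationOn h (Set.Icc 0 1 ∩ Set.Icc t b) :=
            eVariationOn.edist_le h
              ⟨⟨(hmem _).1.le, (hmem _).2.trans hb1⟩, ⟨htw.le, (hmem _).2⟩⟩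
              ⟨ht1, ⟨le_rfl, htb⟩⟩

theorem stmt9 (q : ℕ+ → ℝ)
    (hq_mem : ∀ i, q i ∈ Set.Ioo (0 : ℝ) 1 ∧ ∃ r : ℚ, (r : ℝ) = q i)
    (hq_inj : Function.Injective q)
    (hq_surj : ∀ r : ℚ, (r : ℝ) ∈ Set.Ioo (0 : ℝ) 1 → ∃ i, q i = (r : ℝ))
    (m : ℕ) (v β : Fin (m + 1) → ℝ)
    (hv : ∀ i, v i ∈ Set.Ioo (0 : ℝ) 1)
    (hirr : ∀ i j, i ≠ j → Irrational (v i - v j)) :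
    ENNReal.ofReal (∑ i, |β i|) ≤
      eVariationOn (fun x => ∑ i, β i * jumpFv q (v i) x) (Set.Icc 0 1) ∧
    eVariationOn (fun x => ∑ i, β i * jumpFv q (v i) x) (Set.Icc 0 1) ≤
      ENNReal.ofReal (3 * ∑ i, |β i|) := by
  have hq0 : ∀ i, 0 < q i := fun i => (hq_mem i).1.1
  have hq1 : ∀ i, q i < 1 := fun i => (hq_mem i).1.2
  have hvinj : Function.Injective v := by
    intro i j hij
    by_contra hne
    have h0 := hirr i j hne
    rw [hij, sub_self] at h0
    exact (Rat.not_irrational 0) (by simpa using h0)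
  set h : ℝ → ℝ := fun x => ∑ i, β i * jumpFv q (v i) x with hh
  constructor
  · -- lower bound
    set σ := Tuple.sort v with hσ
    have hwmono : StrictMono (v ∘ σ) :=
      (Tuple.monotone_sort v).strictMono_of_injective (hvinj.comp σ.injective)
    have hjump : ∀ j : Fin (m + 1), ∀ η : ℝ, 0 < η → ∀ a', 0 ≤ a' → a' < v (σ j) →
        ∃ t, a' < t ∧ t < v (σ j) ∧ |β (σ j)| - η ≤ |h (v (σ j)) - h t| := by
      intro j η hη a' ha0 halt
      have hne : ∀ k, k ≠ σ j → v k ≠ v (σ j) := fun k hk hvv => hk (hvinj hvv)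
      set L : ℝ := ∑ k, β k * (if k = σ j then 1 else jumpFv q (v k) (v (σ j))) with hLdef
      have hlim : Tendsto h (𝓝[<] (v (σ j))) (𝓝 L) := by
        rw [hh, hLdef]
        refine tendsto_finset_sum _ (fun k _ => ?_)
        rcases eq_or_ne k (σ j) with hk | hk
        · rw [if_pos hk, hk]
          exact Tendsto.const_mul _ (jumpFv_leftTendsto_self q hq1 (v (σ j)))
        · rw [if_neg hk]
          rcases lt_or_gt_of_ne (hne k hk) with hlt | hgt
          · exact Tendsto.const_mul _ (jumpFv_leftTendsto_of_lt q hlt)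
          · exact Tendsto.const_mul _ (jumpFv_leftTendsto_of_gt q hgt)
      have hzero : jumpFv q (v (σ j)) (v (σ j)) = 0 := by
        rw [jumpFv, if_pos le_rfl, sub_self]
        exact jumpF_of_nonpos hq0 le_rfl
      have hhx : h (v (σ j)) - L = -β (σ j) := by
        rw [hh, hLdef, ← Finset.sum_sub_distrib, Finset.sum_eq_single (σ j)]
        · rw [if_pos rfl, hzero]; ring
        · intro k _ hk; rw [if_neg hk]; ring
        · intro habs; exact absurd (Finset.mem_univ _) habs
      have hev1 : ∀ᶠ t in 𝓝[<] (v (σ j)), dist (h t) L < η := Metric.tendsto_nhds.1 hlim η hη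
      have hev2 : ∀ᶠ t in 𝓝[<] (v (σ j)), t ∈ Set.Ioo a' (v (σ j)) :=
        Ioo_mem_nhdsLT_of_mem ⟨halt, le_rfl⟩
      obtain ⟨t, ht1, ht2⟩ := (hev1.and hev2).exists
      refine ⟨t, ht2.1, ht2.2, ?_⟩
      have habs1 : |h (v (σ j)) - L| = |β (σ j)| := by rw [hhx, abs_neg]
      have habs2 : |h (v (σ j)) - L| - |h t - L| ≤ |h (v (σ j)) - h t| := by
        have h3 := abs_sub_abs_le_abs_sub (h (v (σ j)) - L) (h t - L)
        have heq : (h (v (σ j)) - L) - (h t - L) = h (v (σ j)) - h t := by ring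
        rwa [heq] at h3
      have hd : |h t - L| < η := by rw [← Real.dist_eq]; exact ht1
      linarith
    have key := lower_aux h (m + 1) 1 (v ∘ σ) (fun j => |β (σ j)|) hwmono le_rfl
      (fun j => ⟨(hv _).1, (hv _).2.le⟩) hjump
    rw [Set.inter_self] at key
    apply ENNReal.le_of_forall_pos_le_add
    intro ε hε _
    have hε' : (0 : ℝ) < ε := hε
    have hη : (0 : ℝ) < ε / (m + 1) := by positivity
    calc ENNReal.ofReal (∑ i, |β i|)
        = ∑ i, ENNReal.ofReal |β i| :=
          ENNReal.ofReal_sum_of_nonneg (fun i _ => abs_nonneg _)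
      _ = ∑ j, ENNReal.ofReal |β (σ j)| :=
          (Equiv.sum_comp σ (fun i => ENNReal.ofReal |β i|)).symm
      _ ≤ ∑ j, (ENNReal.ofReal (|β (σ j)| - ε / (m + 1)) + ENNReal.ofReal (ε / (m + 1))) := by
          refine Finset.sum_le_sum fun j _ => ?_
          calc ENNReal.ofReal |β (σ j)|
              = ENNReal.ofReal ((|β (σ j)| - ε / (m + 1)) + ε / (m + 1)) := by congr 1; ring
            _ ≤ _ := ENNReal.ofReal_add_le
      _ = (∑ j, ENNReal.ofReal (|β (σ j)| - ε / (m + 1)))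
            + (m + 1) * ENNReal.ofReal (ε / (m + 1)) := by
          rw [Finset.sum_add_distrib, Finset.sum_const, Finset.card_univ, Fintype.card_fin,
            nsmul_eq_mul]
          norm_num
      _ ≤ eVariationOn h (Set.Icc 0 1) + ε := by
          refine add_le_add (key _ hη) (le_of_eq ?_)
          have hm1 : ((m : ℝ) + 1) ≠ 0 := by positivity
          have hc : ((m : ENNReal) + 1) = ENNReal.ofReal ((m : ℝ) + 1) := by
            rw [ENNReal.ofReal_add (by positivity) zero_le_one]
            simp
          rw [hc, ← ENNReal.ofReal_mul (by positivity), mul_div_cancel₀ _ hm1,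
            ENNReal.ofReal_coe_nnreal]
  · -- upper bound
    refine (upper_bound q hq0 m v β hv).trans (ENNReal.ofReal_le_ofReal ?_)
    have hs : 0 ≤ ∑ i, |β i| := Finset.sum_nonneg (fun i _ => abs_nonneg _)
    linarith
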